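/- arXiv:2310.15054 — 3 statements merged into one kernel-verified Lean document; each statement's English description precedes it below -/
import Mathlib

section
/- Let d, M be positive integers, and for each m ∈ {1,…,M} let n_m, N_m be positive integers and G_m ∈ ℝ^{d×n_m} a matrix. Define the objective F(x₁,…,x_M, h₁,…,h_M) = M · Σ_{m=1}^{M} ‖G_m x_m − h_m‖², where x_m ∈ ℝ^{n_m} and h_m ∈ ℝ^d. Let A be the set of tuples (x₁,…,x_M,h₁,…,h_M) with x_{m,i} ∈ [0,1] for all m,i, Σ_i x_{m,i} = N_m for all m, and h_m = G_m x_m − (1/M) Σ_{n=1}^{M} G_n x_n for all m. Let B be the set of tuples with x_{m,i} ∈ [0,1] for all m,i, Σ_i x_{m,i} = N_m for all m, and Σ_{m=1}^{M} h_m = 0. Then: if (x*₁,…,x*_M,h*₁,…,h*_M) ∈ B satisfies F(x*,h*) ≤ F(x,h) for all (x,h) ∈ B, then (x*,h*) ∈ A and F(x*,h*) ≤ F(x,h) for all (x,h) ∈ A. -/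
/-!
Write `a m := G m x m` and `ā` for the mean of the `a m`. If `∑ m, h m = 0`, then
`a m - h m = ā + (c m - h m)` with `c m := a m - ā`, and the second summands also add up to
zero, so the cross terms cancel:
`∑ m, ‖a m - h m‖² = ∑ m, ‖a m - c m‖² + ∑ m, ‖c m - h m‖²`.
For fixed `x` the relaxed objective is thus minimised exactly at `h = c`, which is the coupling
constraint of problem (6). A minimiser over `B` therefore lies in `A ⊆ B`, and minimises over `A`.
-/

open Finset

variable {ι κ E : Type*} [Fintype ι] [AddCommGroup E] [Module ℝ E]

noncomputable def centered (a : ι → E) (i : ι) : E :=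
  a i - (Fintype.card ι : ℝ)⁻¹ • ∑ j, a j

theorem sum_centered (a : ι → E) : ∑ i, centered a i = 0 := by
  rcases isEmpty_or_nonempty ι with _ | _
  · simp
  · simp [centered, sum_sub_distrib, ← Nat.cast_smul_eq_nsmul ℝ, smul_inv_smul₀]

theorem sum_add_sq_of_sum_eq_zero (v : ℝ) {e : ι → ℝ} (he : ∑ i, e i = 0) :
    ∑ i, (v + e i) ^ 2 = Fintype.card ι * v ^ 2 + ∑ i, e i ^ 2 := by
  simp only [add_sq, sum_add_distrib, ← mul_sum, he]
  simp

theorem centered_fin {M : ℕ} (a : Fin M → E) :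
    centered a = fun m => a m - (M : ℝ)⁻¹ • ∑ n, a n := by
  ext1 m
  rw [centered, Fintype.card_fin]

variable [Fintype κ]

def sqDist (a b : ι → κ → ℝ) : ℝ := ∑ i, ∑ k, (a i k - b i k) ^ 2

theorem sqDist_nonneg (a b : ι → κ → ℝ) : 0 ≤ sqDist a b := by
  unfold sqDist; positivity

theorem sqDist_eq_zero_iff {a b : ι → κ → ℝ} : sqDist a b = 0 ↔ a = b := by
  rw [sqDist, Fintype.sum_eq_zero_iff_of_nonneg fun i => by positivity]
  simp_rw [funext_iff, Pi.zero_apply, Fintype.sum_eq_zero_iff_of_nonneg fun k => sq_nonneg _]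
  simp [funext_iff, sub_eq_zero]

theorem sqDist_eq_sqDist_centered_add (a : ι → κ → ℝ) {h : ι → κ → ℝ}
    (hh : ∑ i, h i = 0) :
    sqDist a h = sqDist a (centered a) + sqDist (centered a) h := by
  set v : κ → ℝ := fun k => (Fintype.card ι : ℝ)⁻¹ * ∑ j, a j k
  have hmean : ∀ i k, a i k - centered a i k = v k := by
    intro i k; simp [centered, v]
  have hsplit : ∀ i k, a i k - h i k = v k + (centered a i k - h i k) := by
    intro i k; rw [← hmean i k]; ring
  have hzero : ∀ k, ∑ i, (centered a i k - h i k) = 0 := by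
    intro k
    simpa [sum_sub_distrib] using congr_fun (congr_arg₂ (· - ·) (sum_centered a) hh) k
  simp only [sqDist, hsplit, hmean]
  rw [sum_comm, sum_comm (f := fun _ k => v k ^ 2),
    sum_comm (f := fun i k => (centered a i k - h i k) ^ 2), ← sum_add_distrib]
  exact sum_congr rfl fun k _ => by simp [sum_add_sq_of_sum_eq_zero (v k) (hzero k)]

theorem eq_centered_of_sqDist_le (a : ι → κ → ℝ) {h : ι → κ → ℝ} (hh : ∑ i, h i = 0)
    (hle : sqDist a h ≤ sqDist a (centered a)) : h = centered a := by
  rw [sqDist_eq_sqDist_centered_add a hh] at hle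
  exact (sqDist_eq_zero_iff.mp (le_antisymm (by linarith) (sqDist_nonneg _ _))).symm

theorem stmt_0_general (d M : ℕ)
    (n N : Fin M → ℕ)
    (G : ∀ m : Fin M, Matrix (Fin d) (Fin (n m)) ℝ)
    (xs : ∀ m : Fin M, Fin (n m) → ℝ) (hs : Fin M → (Fin d → ℝ))
    -- (xs, hs) is feasible for the relaxed problem (7):
    (hBfeas : (∀ m i, xs m i ∈ Set.Icc (0 : ℝ) 1) ∧
      (∀ m, (∑ i, xs m i) = (N m : ℝ)) ∧ ((∑ m, hs m) = 0))
    -- (xs, hs) minimizes F over the feasible set of (7):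
    (hBmin : ∀ (x : ∀ m : Fin M, Fin (n m) → ℝ) (h : Fin M → (Fin d → ℝ)),
      (∀ m i, x m i ∈ Set.Icc (0 : ℝ) 1) → (∀ m, (∑ i, x m i) = (N m : ℝ)) →
      ((∑ m, h m) = 0) →
      (M : ℝ) * ∑ m, ∑ k, ((G m).mulVec (xs m) k - hs m k) ^ 2 ≤
        (M : ℝ) * ∑ m, ∑ k, ((G m).mulVec (x m) k - h m k) ^ 2) :
    -- then (xs, hs) is feasible for problem (6):
    ((∀ m i, xs m i ∈ Set.Icc (0 : ℝ) 1) ∧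
      (∀ m, (∑ i, xs m i) = (N m : ℝ)) ∧
      (∀ m, hs m = (G m).mulVec (xs m) - (M : ℝ)⁻¹ • ∑ n', (G n').mulVec (xs n'))) ∧
    -- and (xs, hs) minimizes F over the feasible set of (6):
    (∀ (x : ∀ m : Fin M, Fin (n m) → ℝ) (h : Fin M → (Fin d → ℝ)),
      (∀ m i, x m i ∈ Set.Icc (0 : ℝ) 1) → (∀ m, (∑ i, x m i) = (N m : ℝ)) →
      (∀ m, h m = (G m).mulVec (x m) - (M : ℝ)⁻¹ • ∑ n', (G n').mulVec (x n')) →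
      (M : ℝ) * ∑ m, ∑ k, ((G m).mulVec (xs m) k - hs m k) ^ 2 ≤
        (M : ℝ) * ∑ m, ∑ k, ((G m).mulVec (x m) k - h m k) ^ 2) := by
  obtain ⟨hxs, hsum, hzero⟩ := hBfeas
  set a := fun m => (G m).mulVec (xs m)
  have hs_eq : hs = centered a := by
    funext m
    have hM : (0 : ℝ) < M := mod_cast m.pos
    exact congr_fun (eq_centered_of_sqDist_le a hzero
      (le_of_mul_le_mul_left (hBmin xs (centered a) hxs hsum (sum_centered a)) hM)) m
  refine ⟨⟨hxs, hsum, fun m => by rw [hs_eq, centered_fin]⟩, ?_⟩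
  intro x h hx hxsum hcouple
  refine hBmin x h hx hxsum ?_
  rw [funext hcouple, ← centered_fin]
  exact sum_centered _

/-- Theorem 1 of the paper: any minimizer of the relaxed problem (7) (feasible set `B`,
with the constraint `∑ m, h m = 0`) is feasible for, and a minimizer of, the original
problem (6) (feasible set `A`, with the coupling constraints
`h m = G m * x m - (1/M) ∑ n, G n * x n`).  The common objective is
`F (x, h) = M * ∑ m, ‖G m * x m - h m‖²`. -/
theorem stmt_0 (d M : ℕ) (hd : 0 < d) (hM : 0 < M)
    (n N : Fin M → ℕ) (hn : ∀ m, 0 < n m) (hN : ∀ m, 0 < N m)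
    (G : ∀ m : Fin M, Matrix (Fin d) (Fin (n m)) ℝ)
    (xs : ∀ m : Fin M, Fin (n m) → ℝ) (hs : Fin M → (Fin d → ℝ))
    -- (xs, hs) is feasible for the relaxed problem (7):
    (hBfeas : (∀ m i, xs m i ∈ Set.Icc (0 : ℝ) 1) ∧
      (∀ m, (∑ i, xs m i) = (N m : ℝ)) ∧ ((∑ m, hs m) = 0))
    -- (xs, hs) minimizes F over the feasible set of (7):
    (hBmin : ∀ (x : ∀ m : Fin M, Fin (n m) → ℝ) (h : Fin M → (Fin d → ℝ)),
      (∀ m i, x m i ∈ Set.Icc (0 : ℝ) 1) → (∀ m, (∑ i, x m i) = (N m : ℝ)) →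
      ((∑ m, h m) = 0) →
      (M : ℝ) * ∑ m, ∑ k, ((G m).mulVec (xs m) k - hs m k) ^ 2 ≤
        (M : ℝ) * ∑ m, ∑ k, ((G m).mulVec (x m) k - h m k) ^ 2) :
    -- then (xs, hs) is feasible for problem (6):
    ((∀ m i, xs m i ∈ Set.Icc (0 : ℝ) 1) ∧
      (∀ m, (∑ i, xs m i) = (N m : ℝ)) ∧
      (∀ m, hs m = (G m).mulVec (xs m) - (M : ℝ)⁻¹ • ∑ n', (G n').mulVec (xs n'))) ∧
    -- and (xs, hs) minimizes F over the feasible set of (6):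
    (∀ (x : ∀ m : Fin M, Fin (n m) → ℝ) (h : Fin M → (Fin d → ℝ)),
      (∀ m i, x m i ∈ Set.Icc (0 : ℝ) 1) → (∀ m, (∑ i, x m i) = (N m : ℝ)) →
      (∀ m, h m = (G m).mulVec (x m) - (M : ℝ)⁻¹ • ∑ n', (G n').mulVec (x n')) →
      (M : ℝ) * ∑ m, ∑ k, ((G m).mulVec (xs m) k - hs m k) ^ 2 ≤
        (M : ℝ) * ∑ m, ∑ k, ((G m).mulVec (x m) k - h m k) ^ 2) :=
  stmt_0_general d M n N G xs hs hBfeas hBmin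
end

section
/- Let d, M be positive integers, and for each m ∈ {1,…,M} let n_m, N_m be positive integers and G_m ∈ ℝ^{d×n_m} a matrix. Define F(x,h) = M · Σ_{m=1}^{M} ‖G_m x_m − h_m‖² and let B be the set of tuples (x₁,…,x_M,h₁,…,h_M) with x_{m,i} ∈ [0,1] for all m,i, Σ_i x_{m,i} = N_m for all m, and Σ_{m=1}^{M} h_m = 0. If (x*₁,…,x*_M,h*₁,…,h*_M) ∈ B satisfies F(x*,h*) ≤ F(x,h) for all (x,h) ∈ B, then for every m ∈ {1,…,M} it holds that h*_m = G_m x*_m − (1/M) Σ_{n=1}^{M} G_n x*_n. -/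
/-!
With the `x`-part fixed at `xs`, the `h`-part of a minimizer minimizes `∑ m, ‖a m - h m‖²` over
`∑ m, h m = 0`, where `a m = G m xs m`. Writing `c` for the mean of the `a m`, the constraint
kills the cross term, so `∑ m, ‖a m - h m‖² = ∑ m, ‖a m - c - h m‖² + M ‖c‖²`; the minimum
`M ‖c‖²` is attained exactly at `h m = a m - c`.
-/

open Finset WithLp

section Centering

variable {ι E : Type*} [Fintype ι] [NormedAddCommGroup E] [InnerProductSpace ℝ E]

theorem sum_norm_sub_sq_eq_of_sum_eq_zero (a h : ι → E) (c : E)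
    (hc : ∑ i, a i = Fintype.card ι • c) (hh : ∑ i, h i = 0) :
    ∑ i, ‖a i - h i‖ ^ 2 = ∑ i, ‖a i - c - h i‖ ^ 2 + Fintype.card ι * ‖c‖ ^ 2 := by
  have hsum : ∑ i, (a i - h i) = Fintype.card ι • c := by
    rw [sum_sub_distrib, hh, sub_zero, hc]
  have expand : ∀ i, ‖a i - c - h i‖ ^ 2 =
      ‖a i - h i‖ ^ 2 - 2 * inner ℝ (a i - h i) c + ‖c‖ ^ 2 :=
    fun i => by rw [sub_right_comm, norm_sub_sq_real]
  simp only [expand, sum_add_distrib, sum_sub_distrib, ← mul_sum, ← sum_inner, hsum,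
    ← Nat.cast_smul_eq_nsmul ℝ, real_inner_smul_left, real_inner_self_eq_norm_sq, sum_const,
    card_univ]
  ring

theorem eq_sub_of_isMinOn_sum_norm_sub_sq {a h₀ : ι → E} {c : E}
    (hc : ∑ i, a i = Fintype.card ι • c) (hh₀ : ∑ i, h₀ i = 0)
    (hmin : IsMinOn (fun h => ∑ i, ‖a i - h i‖ ^ 2) {h | ∑ i, h i = 0} h₀) :
    h₀ = fun i => a i - c := by
  have hcentered : ∑ i, (a i - c) = 0 := by
    rw [sum_sub_distrib, hc, sum_const, card_univ, sub_self]
  have hle := isMinOn_iff.mp hmin _ hcentered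
  simp only [sub_sub_cancel, sum_const, card_univ, nsmul_eq_mul] at hle
  rw [sum_norm_sub_sq_eq_of_sum_eq_zero a h₀ c hc hh₀] at hle
  have hzero : ∑ i, ‖a i - c - h₀ i‖ ^ 2 = 0 :=
    le_antisymm (by linarith) (sum_nonneg fun i _ => sq_nonneg _)
  funext i
  have hi := congrFun ((Fintype.sum_eq_zero_iff_of_nonneg fun j => sq_nonneg _).mp hzero) i
  exact (sub_eq_zero.mp (norm_eq_zero.mp (pow_eq_zero_iff two_ne_zero |>.mp hi))).symm

end Centering

theorem sum_sq_sub_eq_norm_toLp_sub_sq {d : ℕ} (u v : Fin d → ℝ) :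
    ∑ k, (u k - v k) ^ 2 = ‖toLp 2 u - toLp 2 v‖ ^ 2 := by
  rw [EuclideanSpace.real_norm_sq_eq]
  rfl

theorem stmt_1_general (d M : ℕ)
    (n N : Fin M → ℕ)
    (G : ∀ m : Fin M, Matrix (Fin d) (Fin (n m)) ℝ)
    (xs : ∀ m : Fin M, Fin (n m) → ℝ) (hs : Fin M → (Fin d → ℝ))
    -- (xs, hs) is feasible for the relaxed problem (7):
    (hBfeas : (∀ m i, xs m i ∈ Set.Icc (0 : ℝ) 1) ∧
      (∀ m, (∑ i, xs m i) = (N m : ℝ)) ∧ ((∑ m, hs m) = 0))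
    -- (xs, hs) minimizes F over the feasible set of (7):
    (hBmin : ∀ (x : ∀ m : Fin M, Fin (n m) → ℝ) (h : Fin M → (Fin d → ℝ)),
      (∀ m i, x m i ∈ Set.Icc (0 : ℝ) 1) → (∀ m, (∑ i, x m i) = (N m : ℝ)) →
      ((∑ m, h m) = 0) →
      (M : ℝ) * ∑ m, ∑ k, ((G m).mulVec (xs m) k - hs m k) ^ 2 ≤
        (M : ℝ) * ∑ m, ∑ k, ((G m).mulVec (x m) k - h m k) ^ 2) :
    ∀ m, hs m = (G m).mulVec (xs m) - (M : ℝ)⁻¹ • ∑ n', (G n').mulVec (xs n') := by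
  intro m
  obtain ⟨hbox, hsum, hzero⟩ := hBfeas
  have hM : (0 : ℝ) < M := Nat.cast_pos.mpr m.pos
  have hmean : ∑ n', toLp 2 ((G n').mulVec (xs n')) =
      Fintype.card (Fin M) • toLp 2 ((M : ℝ)⁻¹ • ∑ n', (G n').mulVec (xs n')) := by
    rw [← toLp_sum, Fintype.card_fin, ← Nat.cast_smul_eq_nsmul ℝ, ← toLp_smul,
      smul_inv_smul₀ hM.ne']
  have hmin : IsMinOn (fun h => ∑ m, ‖toLp 2 ((G m).mulVec (xs m)) - h m‖ ^ 2)
      {h | ∑ m, h m = 0} (fun m => toLp 2 (hs m)) := by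
    refine isMinOn_iff.mpr fun h hh => ?_
    have := hBmin xs (fun m => ofLp (h m)) hbox hsum (by rw [← ofLp_sum, hh]; rfl)
    simpa only [sum_sq_sub_eq_norm_toLp_sub_sq, toLp_ofLp] using le_of_mul_le_mul_left this hM
  have hcentered : ∑ m, toLp 2 (hs m) = 0 := by rw [← toLp_sum, hzero]; rfl
  exact congrArg ofLp (congrFun (eq_sub_of_isMinOn_sum_norm_sub_sq hmean hcentered hmin) m)

/-- Feasibility step in the proof of Theorem 1: any minimizer of the relaxed problem (7)
automatically satisfies the coupling constraints
`h m = G m * x m - (1/M) ∑ n, G n * x n` of problem (6). -/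
theorem stmt_1 (d M : ℕ) (hd : 0 < d) (hM : 0 < M)
    (n N : Fin M → ℕ) (hn : ∀ m, 0 < n m) (hN : ∀ m, 0 < N m)
    (G : ∀ m : Fin M, Matrix (Fin d) (Fin (n m)) ℝ)
    (xs : ∀ m : Fin M, Fin (n m) → ℝ) (hs : Fin M → (Fin d → ℝ))
    -- (xs, hs) is feasible for the relaxed problem (7):
    (hBfeas : (∀ m i, xs m i ∈ Set.Icc (0 : ℝ) 1) ∧
      (∀ m, (∑ i, xs m i) = (N m : ℝ)) ∧ ((∑ m, hs m) = 0))
    -- (xs, hs) minimizes F over the feasible set of (7):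
    (hBmin : ∀ (x : ∀ m : Fin M, Fin (n m) → ℝ) (h : Fin M → (Fin d → ℝ)),
      (∀ m i, x m i ∈ Set.Icc (0 : ℝ) 1) → (∀ m, (∑ i, x m i) = (N m : ℝ)) →
      ((∑ m, h m) = 0) →
      (M : ℝ) * ∑ m, ∑ k, ((G m).mulVec (xs m) k - hs m k) ^ 2 ≤
        (M : ℝ) * ∑ m, ∑ k, ((G m).mulVec (x m) k - h m k) ^ 2) :
    ∀ m, hs m = (G m).mulVec (xs m) - (M : ℝ)⁻¹ • ∑ n', (G n').mulVec (xs n') :=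
  stmt_1_general d M n N G xs hs hBfeas hBmin
end

section
/- Let d, M be positive integers, and for each m ∈ {1,…,M} let n_m, N_m be positive integers and G_m ∈ ℝ^{d×n_m} a matrix. Suppose (x*₁,…,x*_M,h*₁,…,h*_M) with x*_{m,i} ∈ [0,1] for all m,i, Σ_i x*_{m,i} = N_m for all m, and Σ_{m=1}^{M} h*_m = 0 minimizes M Σ_{m=1}^{M} ‖G_m x_m − h_m‖² over all tuples satisfying these constraints. Then x*₁,…,x*_M minimizes ‖Σ_{m=1}^{M} G_m x_m‖² over all x₁,…,x_M with x_{m,i} ∈ [0,1] for all m,i and Σ_i x_{m,i} = N_m for all m. -/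
/-!
For any `h` with `∑ m, h m = 0`, Cauchy–Schwarz gives
`‖∑ m, G m x m‖² = ‖∑ m, (G m x m - h m)‖² ≤ M ∑ m, ‖G m x m - h m‖²`,
with equality when each `G m x m - h m` is the mean `(1/M) ∑ j, G j x j`.
So the relaxed objective at its minimizer `(x*, h*)` bounds the original objective at `x*`
from above, while for every feasible `x` the relaxed objective at the centering choice of `h`
equals the original objective at `x`.
-/

open Finset

section Centering

variable {ι κ : Type*} [Fintype ι]

lemma sum_sq_sum_le_card_mul_sum_sum_sq_sub [Fintype κ] (a h : ι → κ → ℝ)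
    (hh : ∑ i, h i = 0) :
    ∑ k, (∑ i, a i k) ^ 2 ≤ Fintype.card ι * ∑ i, ∑ k, (a i k - h i k) ^ 2 := by
  rw [sum_comm, mul_sum]
  refine sum_le_sum fun k _ => ?_
  have hk : ∑ i, h i k = 0 := by simpa using congrFun hh k
  calc (∑ i, a i k) ^ 2 = (∑ i, (a i k - h i k)) ^ 2 := by rw [sum_sub_distrib, hk, sub_zero]
    _ ≤ Fintype.card ι * ∑ i, (a i k - h i k) ^ 2 := sq_sum_le_card_mul_sum_sq

noncomputable def deviationFromMean (a : ι → κ → ℝ) (i : ι) (k : κ) : ℝ :=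
  a i k - (∑ j, a j k) / Fintype.card ι

lemma sum_deviationFromMean (a : ι → κ → ℝ) : ∑ i, deviationFromMean a i = 0 := by
  funext k
  rcases isEmpty_or_nonempty ι with hι | hι
  · simp
  · have : (Fintype.card ι : ℝ) ≠ 0 := by positivity
    simp [deviationFromMean, sum_sub_distrib, mul_div_cancel₀ _ this]

lemma card_mul_sum_sum_sq_sub_deviationFromMean [Fintype κ] (a : ι → κ → ℝ) :
    Fintype.card ι * ∑ i, ∑ k, (a i k - deviationFromMean a i k) ^ 2 =
      ∑ k, (∑ i, a i k) ^ 2 := by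
  rcases isEmpty_or_nonempty ι with hι | hι
  · simp
  · have : (Fintype.card ι : ℝ) ≠ 0 := by positivity
    simp only [deviationFromMean, sub_sub_cancel, sum_comm (γ := ι), sum_const, card_univ,
      nsmul_eq_mul, mul_sum]
    refine sum_congr rfl fun k _ => ?_
    field_simp

end Centering

theorem stmt_5_general (d M : ℕ)
    (n N : Fin M → ℕ)
    (G : ∀ m : Fin M, Matrix (Fin d) (Fin (n m)) ℝ)
    (xs : ∀ m : Fin M, Fin (n m) → ℝ) (hs : Fin M → (Fin d → ℝ))
    -- (xs, hs) is feasible for the relaxed problem (7):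
    (hBfeas : (∀ m i, xs m i ∈ Set.Icc (0 : ℝ) 1) ∧
      (∀ m, (∑ i, xs m i) = (N m : ℝ)) ∧ ((∑ m, hs m) = 0))
    -- (xs, hs) minimizes M ∑ m ‖G m x m - h m‖² over the feasible set of (7):
    (hBmin : ∀ (x : ∀ m : Fin M, Fin (n m) → ℝ) (h : Fin M → (Fin d → ℝ)),
      (∀ m i, x m i ∈ Set.Icc (0 : ℝ) 1) → (∀ m, (∑ i, x m i) = (N m : ℝ)) →
      ((∑ m, h m) = 0) →
      (M : ℝ) * ∑ m, ∑ k, ((G m).mulVec (xs m) k - hs m k) ^ 2 ≤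
        (M : ℝ) * ∑ m, ∑ k, ((G m).mulVec (x m) k - h m k) ^ 2) :
    -- then xs minimizes ‖∑ m, G m x m‖² over the box/simplex constraints:
    ∀ (x : ∀ m : Fin M, Fin (n m) → ℝ),
      (∀ m i, x m i ∈ Set.Icc (0 : ℝ) 1) → (∀ m, (∑ i, x m i) = (N m : ℝ)) →
      (∑ k, (∑ m, (G m).mulVec (xs m) k) ^ 2) ≤
        ∑ k, (∑ m, (G m).mulVec (x m) k) ^ 2 := by
  intro x hx_box hx_sum
  set a : Fin M → Fin d → ℝ := fun m => (G m).mulVec (x m)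
  calc ∑ k, (∑ m, (G m).mulVec (xs m) k) ^ 2
      ≤ (M : ℝ) * ∑ m, ∑ k, ((G m).mulVec (xs m) k - hs m k) ^ 2 := by
        simpa using sum_sq_sum_le_card_mul_sum_sum_sq_sub
          (fun m => (G m).mulVec (xs m)) hs hBfeas.2.2
    _ ≤ (M : ℝ) * ∑ m, ∑ k, (a m k - deviationFromMean a m k) ^ 2 :=
        hBmin x _ hx_box hx_sum (sum_deviationFromMean a)
    _ = ∑ k, (∑ m, a m k) ^ 2 := by
        simpa using card_mul_sum_sum_sq_sub_deviationFromMean a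

/-- Consequence of Theorem 1: an optimal solution of the relaxed separable problem (7)
yields an optimal solution of the original coordinated gradient-diversity problem (5),
i.e. `x*` minimizes `‖∑ m, G m * x m‖²` over the box/simplex constraints
(squared Euclidean norm written coordinatewise). -/
theorem stmt_5 (d M : ℕ) (hd : 0 < d) (hM : 0 < M)
    (n N : Fin M → ℕ) (hn : ∀ m, 0 < n m) (hN : ∀ m, 0 < N m)
    (G : ∀ m : Fin M, Matrix (Fin d) (Fin (n m)) ℝ)
    (xs : ∀ m : Fin M, Fin (n m) → ℝ) (hs : Fin M → (Fin d → ℝ))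
    -- (xs, hs) is feasible for the relaxed problem (7):
    (hBfeas : (∀ m i, xs m i ∈ Set.Icc (0 : ℝ) 1) ∧
      (∀ m, (∑ i, xs m i) = (N m : ℝ)) ∧ ((∑ m, hs m) = 0))
    -- (xs, hs) minimizes M ∑ m ‖G m x m - h m‖² over the feasible set of (7):
    (hBmin : ∀ (x : ∀ m : Fin M, Fin (n m) → ℝ) (h : Fin M → (Fin d → ℝ)),
      (∀ m i, x m i ∈ Set.Icc (0 : ℝ) 1) → (∀ m, (∑ i, x m i) = (N m : ℝ)) →
      ((∑ m, h m) = 0) →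
      (M : ℝ) * ∑ m, ∑ k, ((G m).mulVec (xs m) k - hs m k) ^ 2 ≤
        (M : ℝ) * ∑ m, ∑ k, ((G m).mulVec (x m) k - h m k) ^ 2) :
    -- then xs minimizes ‖∑ m, G m x m‖² over the box/simplex constraints:
    ∀ (x : ∀ m : Fin M, Fin (n m) → ℝ),
      (∀ m i, x m i ∈ Set.Icc (0 : ℝ) 1) → (∀ m, (∑ i, x m i) = (N m : ℝ)) →
      (∑ k, (∑ m, (G m).mulVec (xs m) k) ^ 2) ≤
        ∑ k, (∑ m, (G m).mulVec (x m) k) ^ 2 :=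
  stmt_5_general d M n N G xs hs hBfeas hBmin
end
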